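/- (Semigroup convergence implies functional-calculus convergence for bounded continuous functions) Let c ∈ ℝ, let H and H_k (k ∈ ℕ) be complex Hilbert spaces, and let ι_k : H_k → H be bounded operators such that π_k := ι_k* satisfies π_k ι_k = id_{H_k} and sup_k ‖π_k‖ < ∞. Let L_k (on H_k) and L (on H) be bounded self-adjoint operators whose spectra are contained in [c,∞). Assume that for every a ≥ 0 and every f ∈ H one has ι_k exp(−aL_k) π_k f → exp(−aL) f as k → ∞. Then for every bounded continuous function ψ : [c,∞) → ℂ and every f ∈ H one has ι_k ψ(L_k) π_k f → ψ(L) f as k → ∞. In particular, this applies to ψ(x) = exp(−itx) for any t ∈ ℝ, so ι_k exp(−itL_k) π_k → exp(−itL) strongly. -/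

import Mathlib

/-!
Strong convergence of `ι_k ψ(L_k) ι_k*` to `ψ(L)` survives finite linear combinations and
uniform limits of `ψ` on `[c, ∞)`, because `‖ψ(B)‖ ≤ sup |ψ|` and `ι_k` is an isometry. It holds
for `e_a(x) = e^{-ax}`, `a ≥ 0`, by hypothesis, hence for polynomials in `e_s`, hence (Weierstrass
in the variable `y = e^{-sx}`) for `ψ e_s` with `ψ` bounded continuous. Finally
`ψ(B) - (ψ e_s)(B) = ψ(B) (1 - e_s(B))`, and `‖(1 - e_s(L_k)) ι_k* f‖` is eventually as small as
`‖f - e_s(L) f‖`, which is small for small `s > 0`. The unitary group is the case `ψ(x) = e^{-itx}`.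
-/

open Filter Topology ContinuousLinearMap

noncomputable section

/-- The continuous functional calculus `ψ(L)` of a self-adjoint bounded operator `L` (whose
spectrum is real) applied to a function `ψ` of a real variable, implemented via the
`ℂ`-functional calculus of the star-normal element `L`. -/
def cfcReal {H : Type*} [NormedAddCommGroup H] [InnerProductSpace ℂ H] [CompleteSpace H]
    (ψ : ℝ → ℂ) (L : H →L[ℂ] H) : H →L[ℂ] H :=
  cfc (fun z : ℂ => ψ z.re) L

open scoped Polynomial

lemma tendsto_of_forall_dist_le {α E : Type*} [PseudoMetricSpace E] {l : Filter α}
    {u : α → E} {x : E} (C : ℝ)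
    (h : ∀ η > 0, ∃ (v : α → E) (y : E), Tendsto v l (𝓝 y) ∧
      (∀ᶠ k in l, dist (u k) (v k) ≤ C * η) ∧ dist x y ≤ C * η) :
    Tendsto u l (𝓝 x) := by
  refine Metric.tendsto_nhds.2 fun ε hε => ?_
  set η := ε / (3 * (|C| + 1))
  have hη : 0 < η := by positivity
  have hCη : C * η < ε / 3 :=
    calc C * η ≤ |C| * η := mul_le_mul_of_nonneg_right (le_abs_self C) hη.le
      _ < (|C| + 1) * η := by linarith
      _ = ε / 3 := by simp only [η]; field_simp
  obtain ⟨v, y, hv, huv, hxy⟩ := h η hη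
  filter_upwards [huv, Metric.tendsto_nhds.1 hv (ε / 3) (by positivity)] with k hk hvk
  calc dist (u k) x ≤ dist (u k) (v k) + dist (v k) y + dist y x := dist_triangle4 _ _ _ _
    _ < ε := by rw [dist_comm y x]; linarith

lemma continuous_exp_neg_smul {A : Type*} [NormedRing A] [NormedAlgebra ℂ A] [CompleteSpace A]
    (a : A) : Continuous fun s : ℝ => NormedSpace.exp ((-(s : ℂ)) • a) :=
  (continuous_iff_continuousAt.2 fun b => (NormedSpace.exp_analytic (𝕂 := ℂ) b).continuousAt).comp
    (by fun_prop)

lemma ContinuousLinearMap.norm_adjoint_apply_le_of_norm_map {𝕜 E F : Type*} [RCLike 𝕜]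
    [NormedAddCommGroup E] [InnerProductSpace 𝕜 E] [CompleteSpace E]
    [NormedAddCommGroup F] [InnerProductSpace 𝕜 F] [CompleteSpace F]
    {u : E →L[𝕜] F} (hu : ∀ x, ‖u x‖ = ‖x‖) (v : F) : ‖adjoint u v‖ ≤ ‖v‖ := by
  have hnorm : ‖adjoint u‖ ≤ 1 := by
    rw [LinearIsometryEquiv.norm_map]
    exact u.opNorm_le_bound zero_le_one fun x => by rw [hu, one_mul]
  simpa using (adjoint u).le_of_opNorm_le hnorm v

open Polynomial in
lemma exists_complex_polynomial_near_of_continuousOn (a b : ℝ) (f : ℝ → ℂ)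
    (hf : ContinuousOn f (Set.Icc a b)) (ε : ℝ) (hε : 0 < ε) :
    ∃ p : ℂ[X], ∀ x ∈ Set.Icc a b, ‖p.eval (x : ℂ) - f x‖ < ε := by
  obtain ⟨p, hp⟩ := exists_polynomial_near_of_continuousOn a b (fun x => (f x).re)
    (Complex.continuous_re.comp_continuousOn hf) (ε / 2) (half_pos hε)
  obtain ⟨q, hq⟩ := exists_polynomial_near_of_continuousOn a b (fun x => (f x).im)
    (Complex.continuous_im.comp_continuousOn hf) (ε / 2) (half_pos hε)
  refine ⟨p.map Complex.ofRealHom + C Complex.I * q.map Complex.ofRealHom, fun x hx => ?_⟩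
  have hmap (r : ℝ[X]) : (r.map Complex.ofRealHom).eval (x : ℂ) = ((r.eval x : ℝ) : ℂ) := by
    rw [eval_map]
    exact eval₂_at_apply _ _
  calc ‖(p.map Complex.ofRealHom + C Complex.I * q.map Complex.ofRealHom).eval (x : ℂ) - f x‖
      ≤ |p.eval x - (f x).re| + |q.eval x - (f x).im| := by
        convert Complex.norm_le_abs_re_add_abs_im _ using 3 <;> simp [hmap]
    _ < ε / 2 + ε / 2 := add_lt_add (hp x hx) (hq x hx)
    _ = ε := add_halves ε

def negExp (a x : ℝ) : ℂ := Complex.exp (-(a : ℂ) * x)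

lemma continuous_negExp (a : ℝ) : Continuous (negExp a) := by
  unfold negExp
  fun_prop

lemma negExp_eq_ofReal_exp (a x : ℝ) : negExp a x = (Real.exp (-(a * x)) : ℂ) := by
  simp [negExp, Complex.ofReal_exp]

lemma negExp_pow (a x : ℝ) (m : ℕ) : negExp a x ^ m = negExp (m * a) x := by
  rw [negExp, negExp, ← Complex.exp_nat_mul]
  push_cast
  ring_nf

section CfcReal

variable {W : Type*} [NormedAddCommGroup W] [InnerProductSpace ℂ W] [CompleteSpace W]
  {B : W →L[ℂ] W} {c M : ℝ} {ψ φ : ℝ → ℂ}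

lemma IsSelfAdjoint.re_mem_spectrum (hB : IsSelfAdjoint B) {z : ℂ} (hz : z ∈ spectrum ℂ B) :
    z.re ∈ spectrum ℝ B := by
  simpa using hB.spectrumRestricts.apply_mem hz

lemma IsSelfAdjoint.continuousOn_comp_re_spectrum (hB : IsSelfAdjoint B)
    (hspec : spectrum ℝ B ⊆ Set.Ici c) (hψ : ContinuousOn ψ (Set.Ici c)) :
    ContinuousOn (fun z : ℂ => ψ z.re) (spectrum ℂ B) :=
  hψ.comp Complex.continuous_re.continuousOn fun _ hz => hspec (hB.re_mem_spectrum hz)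

lemma IsSelfAdjoint.norm_cfcReal_apply_le (hB : IsSelfAdjoint B)
    (hspec : spectrum ℝ B ⊆ Set.Ici c) (hM : ∀ x ∈ Set.Ici c, ‖ψ x‖ ≤ M) (v : W) :
    ‖cfcReal ψ B v‖ ≤ M * ‖v‖ := by
  have hM0 : 0 ≤ M := (norm_nonneg _).trans (hM c Set.self_mem_Ici)
  have hnorm : ‖cfcReal ψ B‖ ≤ M :=
    norm_cfc_le hM0 fun _ hz => hM _ (hspec (hB.re_mem_spectrum hz))
  exact (cfcReal ψ B).le_of_opNorm_le hnorm v

lemma IsSelfAdjoint.cfcReal_exp_mul (hB : IsSelfAdjoint B) (w : ℂ) :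
    cfcReal (fun x => Complex.exp (w * x)) B = NormedSpace.exp (w • B) := by
  have : IsStarNormal B := hB.isStarNormal
  calc cfcReal (fun x => Complex.exp (w * x)) B
      = cfc (Complex.exp ∘ (w * ·)) B :=
        cfc_congr fun z hz => by simp only [Function.comp, ← hB.mem_spectrum_eq_re hz]
    _ = NormedSpace.exp (w • B) := by
        rw [cfc_comp Complex.exp (w * ·) B, cfc_const_mul_id w B,
          CFC.complex_exp_eq_normedSpace_exp]

lemma IsSelfAdjoint.cfcReal_mul (hB : IsSelfAdjoint B) (hspec : spectrum ℝ B ⊆ Set.Ici c)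
    (hψ : ContinuousOn ψ (Set.Ici c)) (hφ : ContinuousOn φ (Set.Ici c)) :
    cfcReal (fun x => ψ x * φ x) B = cfcReal ψ B * cfcReal φ B :=
  cfc_mul _ _ B (hB.continuousOn_comp_re_spectrum hspec hψ)
    (hB.continuousOn_comp_re_spectrum hspec hφ)

lemma IsSelfAdjoint.cfcReal_sub (hB : IsSelfAdjoint B) (hspec : spectrum ℝ B ⊆ Set.Ici c)
    (hψ : ContinuousOn ψ (Set.Ici c)) (hφ : ContinuousOn φ (Set.Ici c)) :
    cfcReal (fun x => ψ x - φ x) B = cfcReal ψ B - cfcReal φ B :=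
  cfc_sub _ _ B (hB.continuousOn_comp_re_spectrum hspec hψ)
    (hB.continuousOn_comp_re_spectrum hspec hφ)

lemma IsSelfAdjoint.cfcReal_sum_mul {α : Type*} (hB : IsSelfAdjoint B)
    (hspec : spectrum ℝ B ⊆ Set.Ici c) (s : Finset α) (a : α → ℂ) {φ : α → ℝ → ℂ}
    (hφ : ∀ m ∈ s, ContinuousOn (φ m) (Set.Ici c)) :
    cfcReal (fun x => ∑ m ∈ s, a m * φ m x) B = ∑ m ∈ s, a m • cfcReal (φ m) B := by
  have hcont := fun m hm => hB.continuousOn_comp_re_spectrum hspec (hφ m hm)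
  calc cfcReal (fun x => ∑ m ∈ s, a m * φ m x) B
      = cfc (∑ m ∈ s, fun z : ℂ => a m * φ m z.re) B := by
        simp only [cfcReal, Finset.sum_fn]
    _ = ∑ m ∈ s, a m • cfcReal (φ m) B := by
        rw [cfc_sum (fun m (z : ℂ) => a m * φ m z.re) B s
          fun m hm => continuousOn_const.mul (hcont m hm)]
        exact Finset.sum_congr rfl fun m hm => cfc_const_mul _ _ B (hcont m hm)

lemma IsSelfAdjoint.cfcReal_apply_sub_cfcReal_mul_apply (hB : IsSelfAdjoint B)
    (hspec : spectrum ℝ B ⊆ Set.Ici c) (hψ : ContinuousOn ψ (Set.Ici c))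
    (hφ : ContinuousOn φ (Set.Ici c)) (v : W) :
    cfcReal ψ B v - cfcReal (fun x => ψ x * φ x) B v = cfcReal ψ B (v - cfcReal φ B v) := by
  rw [hB.cfcReal_mul hspec hψ hφ, mul_apply_eq_comp, map_sub]

lemma IsSelfAdjoint.cfcReal_negExp (hB : IsSelfAdjoint B) (a : ℝ) :
    cfcReal (negExp a) B = NormedSpace.exp ((-(a : ℂ)) • B) :=
  hB.cfcReal_exp_mul _

lemma IsSelfAdjoint.exists_pos_norm_sub_cfcReal_negExp_apply_lt
    (hB : IsSelfAdjoint B) (f : W) {η : ℝ} (hη : 0 < η) :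
    ∃ s > 0, ‖f - cfcReal (negExp s) B f‖ < η := by
  have hcont : Tendsto (fun s : ℝ => cfcReal (negExp s) B f) (𝓝[>] 0) (𝓝 f) := by
    simpa [hB.cfcReal_negExp] using
      (((continuous_exp_neg_smul B).clm_apply continuous_const).tendsto 0).mono_left
        nhdsWithin_le_nhds
  have hsmall := hcont.eventually (Metric.ball_mem_nhds f hη)
  obtain ⟨s, hsmall, hs⟩ := (hsmall.and self_mem_nhdsWithin).exists
  exact ⟨s, hs, by simpa [dist_eq_norm'] using hsmall⟩

end CfcReal

section Approximation

variable {c M s : ℝ} {ψ : ℝ → ℂ}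

lemma continuousOn_comp_neg_log_div_mul (hψ : ContinuousOn ψ (Set.Ici c))
    (hM : ∀ x ∈ Set.Ici c, ‖ψ x‖ ≤ M) (hs : 0 < s) :
    ContinuousOn (fun y : ℝ => ψ (-Real.log y / s) * y) (Set.Icc 0 (Real.exp (-(s * c)))) := by
  have hmaps : Set.MapsTo (fun y => -Real.log y / s) (Set.Ioc 0 (Real.exp (-(s * c))))
      (Set.Ici c) := fun y hy => by
    have := Real.log_le_log hy.1 hy.2
    rw [Real.log_exp] at this
    rw [Set.mem_Ici, le_div_iff₀ hs]
    linarith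
  have hbound : ∀ y ∈ Set.Icc 0 (Real.exp (-(s * c))), ‖ψ (-Real.log y / s) * y‖ ≤ M * y := by
    rintro y ⟨hy0, hyb⟩
    rcases hy0.eq_or_lt with rfl | hpos
    · simp
    · rw [norm_mul, Complex.norm_real, Real.norm_of_nonneg hy0]
      exact mul_le_mul_of_nonneg_right (hM _ (hmaps ⟨hpos, hyb⟩)) hy0
  rintro y ⟨hy0, hyb⟩
  rcases hy0.eq_or_lt with rfl | hpos
  · have hM0 : Tendsto (fun y : ℝ => M * y) (𝓝[Set.Icc 0 (Real.exp (-(s * c)))] 0) (𝓝 0) :=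
      tendsto_nhdsWithin_of_tendsto_nhds ((continuous_const_mul M).tendsto' 0 0 (mul_zero M))
    simpa [ContinuousWithinAt] using squeeze_zero_norm' (eventually_nhdsWithin_of_forall hbound) hM0
  · have hcont : ContinuousOn (fun y : ℝ => ψ (-Real.log y / s) * y)
        (Set.Ioc 0 (Real.exp (-(s * c)))) :=
      have hlog : ContinuousOn (fun y => -Real.log y / s) (Set.Ioc 0 (Real.exp (-(s * c)))) :=
        (Real.continuousOn_log.mono fun y (hy : y ∈ Set.Ioc _ _) => hy.1.ne').neg.div_const s
      (hψ.comp hlog hmaps).mul Complex.continuous_ofReal.continuousOn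
    exact (hcont y ⟨hpos, hyb⟩).mono_of_mem_nhdsWithin
      (mem_nhdsWithin.2 ⟨Set.Ioi 0, isOpen_Ioi, hpos, fun z hz => ⟨hz.1, hz.2.2⟩⟩)

/-- In the variable `y = e^{-sx} ∈ (0, e^{-sc}]` the function `ψ x * e^{-sx}` becomes
`ψ (-log y / s) * y`, which extends continuously by `0` to `y = 0`, so Weierstrass applies. -/
lemma exists_polynomial_near_mul_negExp (hψ : ContinuousOn ψ (Set.Ici c))
    (hM : ∀ x ∈ Set.Ici c, ‖ψ x‖ ≤ M) (hs : 0 < s) {ε : ℝ} (hε : 0 < ε) :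
    ∃ p : ℂ[X], ∀ x ∈ Set.Ici c, ‖ψ x * negExp s x - p.eval (negExp s x)‖ ≤ ε := by
  obtain ⟨p, hp⟩ := exists_complex_polynomial_near_of_continuousOn _ _ _
    (continuousOn_comp_neg_log_div_mul hψ hM hs) ε hε
  refine ⟨p, fun x hx => ?_⟩
  have hy : Real.exp (-(s * x)) ∈ Set.Icc 0 (Real.exp (-(s * c))) :=
    ⟨(Real.exp_pos _).le, Real.exp_le_exp.2 (by nlinarith [Set.mem_Ici.1 hx])⟩
  have hlog : -Real.log (Real.exp (-(s * x))) / s = x := by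
    rw [Real.log_exp]
    field_simp
  rw [norm_sub_rev]
  simpa only [negExp_eq_ofReal_exp, hlog] using (hp _ hy).le

end Approximation

section Compression

variable {α H : Type*} [NormedAddCommGroup H] [InnerProductSpace ℂ H] [CompleteSpace H]
  {Hk : α → Type*} [∀ k, NormedAddCommGroup (Hk k)] [∀ k, InnerProductSpace ℂ (Hk k)]
  [∀ k, CompleteSpace (Hk k)]

def CfcStrongTendsto (l : Filter α) (ι : ∀ k, Hk k →L[ℂ] H) (Lk : ∀ k, Hk k →L[ℂ] Hk k)
    (L : H →L[ℂ] H) (ψ : ℝ → ℂ) : Prop :=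
  ∀ f : H, Tendsto (fun k => ι k (cfcReal ψ (Lk k) (adjoint (ι k) f))) l (𝓝 (cfcReal ψ L f))

variable {l : Filter α} {ι : ∀ k, Hk k →L[ℂ] H} {Lk : ∀ k, Hk k →L[ℂ] Hk k} {L : H →L[ℂ] H}
  {c M s : ℝ} {ψ : ℝ → ℂ}

namespace CfcStrongTendsto

lemma sum_mul {β : Type*} (hLk : ∀ k, IsSelfAdjoint (Lk k)) (hL : IsSelfAdjoint L)
    (hLk_spec : ∀ k, spectrum ℝ (Lk k) ⊆ Set.Ici c) (hL_spec : spectrum ℝ L ⊆ Set.Ici c)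
    (t : Finset β) (a : β → ℂ) {φ : β → ℝ → ℂ} (hφc : ∀ m ∈ t, ContinuousOn (φ m) (Set.Ici c))
    (hφ : ∀ m ∈ t, CfcStrongTendsto l ι Lk L (φ m)) :
    CfcStrongTendsto l ι Lk L (fun x => ∑ m ∈ t, a m * φ m x) := by
  intro f
  simp only [(hLk _).cfcReal_sum_mul (hLk_spec _) t a hφc, hL.cfcReal_sum_mul hL_spec t a hφc,
    sum_apply, smul_apply, map_sum, map_smul]
  exact tendsto_finsetSum t fun m hm => (hφ m hm f).const_smul (a m)

lemma polynomial_eval_negExp (hLk : ∀ k, IsSelfAdjoint (Lk k)) (hL : IsSelfAdjoint L)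
    (hLk_spec : ∀ k, spectrum ℝ (Lk k) ⊆ Set.Ici c) (hL_spec : spectrum ℝ L ⊆ Set.Ici c)
    (hexp : ∀ a, 0 ≤ a → CfcStrongTendsto l ι Lk L (negExp a)) (hs : 0 ≤ s) (p : ℂ[X]) :
    CfcStrongTendsto l ι Lk L (fun x => p.eval (negExp s x)) := by
  have hp : (fun x => p.eval (negExp s x))
      = fun x => ∑ m ∈ Finset.range (p.natDegree + 1), p.coeff m * negExp (m * s) x := by
    simp only [Polynomial.eval_eq_sum_range, negExp_pow]
  rw [hp]
  exact sum_mul hLk hL hLk_spec hL_spec _ _ (fun m _ => (continuous_negExp _).continuousOn)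
    fun m _ => hexp _ (by positivity)

lemma of_forall_near (hι : ∀ k x, ‖ι k x‖ = ‖x‖) (hLk : ∀ k, IsSelfAdjoint (Lk k))
    (hL : IsSelfAdjoint L) (hLk_spec : ∀ k, spectrum ℝ (Lk k) ⊆ Set.Ici c)
    (hL_spec : spectrum ℝ L ⊆ Set.Ici c) (hψ : ContinuousOn ψ (Set.Ici c))
    (h : ∀ η > 0, ∃ g : ℝ → ℂ, ContinuousOn g (Set.Ici c) ∧ CfcStrongTendsto l ι Lk L g ∧
      ∀ x ∈ Set.Ici c, ‖ψ x - g x‖ ≤ η) :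
    CfcStrongTendsto l ι Lk L ψ := by
  intro f
  refine tendsto_of_forall_dist_le ‖f‖ fun η hη => ?_
  obtain ⟨g, hgc, hg, hψg⟩ := h η hη
  refine ⟨_, _, hg f, Eventually.of_forall fun k => ?_, ?_⟩
  · rw [dist_eq_norm, ← map_sub, hι, ← sub_apply, ← (hLk k).cfcReal_sub (hLk_spec k) hψ hgc]
    calc _ ≤ η * ‖adjoint (ι k) f‖ := (hLk k).norm_cfcReal_apply_le (hLk_spec k) hψg _
      _ ≤ ‖f‖ * η := by
        rw [mul_comm]
        exact mul_le_mul_of_nonneg_right (norm_adjoint_apply_le_of_norm_map (hι k) f) hη.le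
  · rw [dist_eq_norm, ← sub_apply, ← hL.cfcReal_sub hL_spec hψ hgc, mul_comm]
    exact hL.norm_cfcReal_apply_le hL_spec hψg f

lemma mul_negExp (hι : ∀ k x, ‖ι k x‖ = ‖x‖) (hLk : ∀ k, IsSelfAdjoint (Lk k))
    (hL : IsSelfAdjoint L) (hLk_spec : ∀ k, spectrum ℝ (Lk k) ⊆ Set.Ici c)
    (hL_spec : spectrum ℝ L ⊆ Set.Ici c)
    (hexp : ∀ a, 0 ≤ a → CfcStrongTendsto l ι Lk L (negExp a))
    (hψ : ContinuousOn ψ (Set.Ici c)) (hM : ∀ x ∈ Set.Ici c, ‖ψ x‖ ≤ M) (hs : 0 < s) :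
    CfcStrongTendsto l ι Lk L (fun x => ψ x * negExp s x) :=
  of_forall_near hι hLk hL hLk_spec hL_spec (hψ.mul (continuous_negExp s).continuousOn)
    fun η hη => by
      obtain ⟨p, hp⟩ := exists_polynomial_near_mul_negExp hψ hM hs hη
      exact ⟨_, (p.continuous.comp (continuous_negExp s)).continuousOn,
        polynomial_eval_negExp hLk hL hLk_spec hL_spec hexp hs.le p, hp⟩

lemma of_bounded (hι : ∀ k x, ‖ι k x‖ = ‖x‖) (hLk : ∀ k, IsSelfAdjoint (Lk k))
    (hL : IsSelfAdjoint L) (hLk_spec : ∀ k, spectrum ℝ (Lk k) ⊆ Set.Ici c)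
    (hL_spec : spectrum ℝ L ⊆ Set.Ici c)
    (hexp : ∀ a, 0 ≤ a → CfcStrongTendsto l ι Lk L (negExp a))
    (hψ : ContinuousOn ψ (Set.Ici c)) (hM : ∀ x ∈ Set.Ici c, ‖ψ x‖ ≤ M) :
    CfcStrongTendsto l ι Lk L ψ := by
  have hM0 : 0 ≤ M := (norm_nonneg _).trans (hM c Set.self_mem_Ici)
  intro f
  refine tendsto_of_forall_dist_le M fun η hη => ?_
  obtain ⟨s, hs, hfs⟩ := hL.exists_pos_norm_sub_cfcReal_negExp_apply_lt f hη
  have hes := (continuous_negExp s).continuousOn (s := Set.Ici c)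
  have hdiff : Tendsto (fun k => ι k (adjoint (ι k) f) - ι k (cfcReal (negExp s) (Lk k)
      (adjoint (ι k) f))) l (𝓝 (f - cfcReal (negExp s) L f)) := by
    simpa [(hLk _).cfcReal_negExp, hL.cfcReal_negExp] using (hexp 0 le_rfl f).sub (hexp s hs.le f)
  refine ⟨_, _, mul_negExp hι hLk hL hLk_spec hL_spec hexp hψ hM hs f, ?_, ?_⟩
  · filter_upwards [hdiff.norm.eventually (gt_mem_nhds hfs)] with k hk
    rw [dist_eq_norm, ← map_sub, hι,
      (hLk k).cfcReal_apply_sub_cfcReal_mul_apply (hLk_spec k) hψ hes]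
    calc _ ≤ M * ‖adjoint (ι k) f - cfcReal (negExp s) (Lk k) (adjoint (ι k) f)‖ :=
          (hLk k).norm_cfcReal_apply_le (hLk_spec k) hM _
      _ ≤ M * η := by
          rw [← hι k, map_sub]
          exact mul_le_mul_of_nonneg_left hk.le hM0
  · rw [dist_eq_norm, hL.cfcReal_apply_sub_cfcReal_mul_apply hL_spec hψ hes]
    exact (hL.norm_cfcReal_apply_le hL_spec hM _).trans (mul_le_mul_of_nonneg_left hfs.le hM0)

end CfcStrongTendsto

end Compression

theorem mosco_semigroup_to_boundedContinuous_general (c : ℝ)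
    {H : Type*} [NormedAddCommGroup H] [InnerProductSpace ℂ H] [CompleteSpace H]
    {Hk : ℕ → Type*} [∀ k, NormedAddCommGroup (Hk k)] [∀ k, InnerProductSpace ℂ (Hk k)]
    [∀ k, CompleteSpace (Hk k)]
    (ι : ∀ k, Hk k →L[ℂ] H)
    (hπι : ∀ k, (adjoint (ι k)).comp (ι k) = ContinuousLinearMap.id ℂ (Hk k))
    (Lk : ∀ k, Hk k →L[ℂ] Hk k) (L : H →L[ℂ] H)
    (hLk_sa : ∀ k, IsSelfAdjoint (Lk k)) (hL_sa : IsSelfAdjoint L)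
    (hLk_spec : ∀ k, spectrum ℝ (Lk k) ⊆ Set.Ici c) (hL_spec : spectrum ℝ L ⊆ Set.Ici c)
    (hsemigroup : ∀ a : ℝ, 0 ≤ a → ∀ f : H,
      Tendsto (fun k => ι k (NormedSpace.exp ((-(a : ℂ)) • Lk k) (adjoint (ι k) f)))
        atTop (𝓝 (NormedSpace.exp ((-(a : ℂ)) • L) f))) :
    (∀ ψ : ℝ → ℂ, ContinuousOn ψ (Set.Ici c) → (∃ M : ℝ, ∀ x ∈ Set.Ici c, ‖ψ x‖ ≤ M) →
      ∀ f : H,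
        Tendsto (fun k => ι k (cfcReal ψ (Lk k) (adjoint (ι k) f)))
          atTop (𝓝 (cfcReal ψ L f))) ∧
    (∀ t : ℝ, ∀ f : H,
      Tendsto (fun k => ι k (NormedSpace.exp ((-(Complex.I * (t : ℂ))) • Lk k)
          (adjoint (ι k) f)))
        atTop (𝓝 (NormedSpace.exp ((-(Complex.I * (t : ℂ))) • L) f))) := by
  have hι : ∀ k x, ‖ι k x‖ = ‖x‖ := fun k => (ι k).norm_map_iff_adjoint_comp_self.2 (hπι k)
  have hexp : ∀ a, 0 ≤ a → CfcStrongTendsto atTop ι Lk L (negExp a) := fun a ha f => by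
    simpa only [(hLk_sa _).cfcReal_negExp, hL_sa.cfcReal_negExp] using hsemigroup a ha f
  have hbounded : ∀ ψ : ℝ → ℂ, ContinuousOn ψ (Set.Ici c) →
      (∃ M : ℝ, ∀ x ∈ Set.Ici c, ‖ψ x‖ ≤ M) → CfcStrongTendsto atTop ι Lk L ψ :=
    fun ψ hψ ⟨M, hM⟩ => .of_bounded hι hLk_sa hL_sa hLk_spec hL_spec hexp hψ hM
  refine ⟨hbounded, fun t f => ?_⟩
  have hunitary : ∀ x ∈ Set.Ici c, ‖Complex.exp (-(Complex.I * t) * x)‖ ≤ 1 := fun x _ => by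
    rw [Complex.norm_exp]
    simp
  have hcont : Continuous fun x : ℝ => Complex.exp (-(Complex.I * t) * x) := by fun_prop
  simpa only [(hLk_sa _).cfcReal_exp_mul, hL_sa.cfcReal_exp_mul] using
    hbounded _ hcont.continuousOn ⟨1, hunitary⟩ f

/-- **Semigroup convergence implies functional-calculus convergence for bounded continuous
functions.** If `ι_k exp(-aL_k) π_k → exp(-aL)` strongly for all `a ≥ 0`, then
`ι_k ψ(L_k) π_k → ψ(L)` strongly for every bounded continuous `ψ : [c,∞) → ℂ`; in
particular `ι_k exp(-itL_k) π_k → exp(-itL)` strongly for every `t ∈ ℝ`. -/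
theorem mosco_semigroup_to_boundedContinuous (c : ℝ)
    {H : Type*} [NormedAddCommGroup H] [InnerProductSpace ℂ H] [CompleteSpace H]
    {Hk : ℕ → Type*} [∀ k, NormedAddCommGroup (Hk k)] [∀ k, InnerProductSpace ℂ (Hk k)]
    [∀ k, CompleteSpace (Hk k)]
    (ι : ∀ k, Hk k →L[ℂ] H)
    (hπι : ∀ k, (adjoint (ι k)).comp (ι k) = ContinuousLinearMap.id ℂ (Hk k))
    (hπbd : ∃ C : ℝ, ∀ k, ‖adjoint (ι k)‖ ≤ C)
    (Lk : ∀ k, Hk k →L[ℂ] Hk k) (L : H →L[ℂ] H)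
    (hLk_sa : ∀ k, IsSelfAdjoint (Lk k)) (hL_sa : IsSelfAdjoint L)
    (hLk_spec : ∀ k, spectrum ℝ (Lk k) ⊆ Set.Ici c) (hL_spec : spectrum ℝ L ⊆ Set.Ici c)
    (hsemigroup : ∀ a : ℝ, 0 ≤ a → ∀ f : H,
      Tendsto (fun k => ι k (NormedSpace.exp ((-(a : ℂ)) • Lk k) (adjoint (ι k) f)))
        atTop (𝓝 (NormedSpace.exp ((-(a : ℂ)) • L) f))) :
    (∀ ψ : ℝ → ℂ, ContinuousOn ψ (Set.Ici c) → (∃ M : ℝ, ∀ x ∈ Set.Ici c, ‖ψ x‖ ≤ M) →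
      ∀ f : H,
        Tendsto (fun k => ι k (cfcReal ψ (Lk k) (adjoint (ι k) f)))
          atTop (𝓝 (cfcReal ψ L f))) ∧
    (∀ t : ℝ, ∀ f : H,
      Tendsto (fun k => ι k (NormedSpace.exp ((-(Complex.I * (t : ℂ))) • Lk k)
          (adjoint (ι k) f)))
        atTop (𝓝 (NormedSpace.exp ((-(Complex.I * (t : ℂ))) • L) f))) :=
  mosco_semigroup_to_boundedContinuous_general c ι hπι Lk L hLk_sa hL_sa hLk_spec hL_spec hsemigroup
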